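/- For all integers m ≥ n ≥ 1 and k ≥ 0, the number of semistandard Young tableaux of shape (2^k) with entries in {1,…,m} equals Σ_{0 ≤ a ≤ b ≤ m−n} f_n(2^{k−b},1^{b−a}) · f_{m−n}(2^a,1^{b−a}), where f_r(λ) denotes the number of semistandard Young tableaux of shape λ with entries in {1,…,r}, and by convention f_r(2^i,1^j) = 0 whenever i < 0 or j < 0. -/

import Mathlib

open MvPolynomial

/-- Semistandard Young tableaux of shape `μ` with all entries < `N`
(entries `0,…,N-1` playing the role of `1,…,N`). -/
def BddSsyt (μ : YoungDiagram) (N : ℕ) : Type :=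
  {T : SemistandardYoungTableau μ // ∀ c ∈ μ.cells, T c.1 c.2 < N}

noncomputable instance (μ : YoungDiagram) (N : ℕ) : Fintype (BddSsyt μ N) :=
  Fintype.ofInjective
    (fun (T : BddSsyt μ N) (c : μ.cells) => (⟨T.1 c.1.1 c.1.2, T.2 c.1 c.2⟩ : Fin N))
    (by
      intro T₁ T₂ h
      apply Subtype.ext
      ext i j
      by_cases hij : (i, j) ∈ μ
      · exact congrArg Fin.val (congrFun h ⟨(i, j), (YoungDiagram.mem_cells _).mpr hij⟩)
      · rw [T₁.1.zeros hij, T₂.1.zeros hij])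

/-- The Schur polynomial of a Young diagram `μ` in `N` variables, defined as the
generating function of semistandard Young tableaux of shape `μ` with entries in `{0,…,N-1}`. -/
noncomputable def schurYD (N : ℕ) (μ : YoungDiagram) : MvPolynomial (Fin N) ℤ :=
  ∑ T : BddSsyt μ N, ∏ c ∈ μ.cells.attach,
    X (⟨T.1 c.1.1 c.1.2, T.2 c.1 c.2⟩ : Fin N)

/-- The Young diagram whose rows are the parts of the multiset `m` (in decreasing order). -/
def ydOf (m : Multiset ℕ) : YoungDiagram :=
  YoungDiagram.ofRowLens (m.sort (· ≥ ·)) ((m.pairwise_sort _).sortedGE)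

/-- The Schur polynomial in `N` variables of the partition with parts `m`. -/
noncomputable def schur (N : ℕ) (m : Multiset ℕ) : MvPolynomial (Fin N) ℤ :=
  schurYD N (ydOf m)

/-- The partition `(2^a, 1^b)`. -/
def twoOne (a b : ℕ) : Multiset ℕ :=
  Multiset.replicate a 2 + Multiset.replicate b 1

/-- The Schur polynomial of `(2^a, 1^b)` with integer indices, with the convention
that it is `0` whenever `a < 0` or `b < 0`. -/
noncomputable def schurZ (N : ℕ) (a b : ℤ) : MvPolynomial (Fin N) ℤ :=
  if 0 ≤ a ∧ 0 ≤ b then schur N (twoOne a.toNat b.toNat) else 0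

/-- A family of symmetric polynomials (one for each number `N` of variables) is Schur-positive
if it is a fixed nonnegative integer combination of Schur polynomials, uniformly in `N`. -/
def SchurPos (F : (N : ℕ) → MvPolynomial (Fin N) ℤ) : Prop :=
  ∃ c : Multiset ℕ →₀ ℕ, ∀ N : ℕ, 1 ≤ N →
    F N = ∑ μ ∈ c.support, (c μ) • schur N μ

def SchurNeg (F : (N : ℕ) → MvPolynomial (Fin N) ℤ) : Prop :=
  SchurPos (fun N => -F N)

/-- `μ ∪ 4^a ∪ (3,1)^b ∪ (2,2)^c` as a multiset of parts. -/
def qForm (μ : Multiset ℕ) (t : ℕ × ℕ × ℕ) : Multiset ℕ :=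
  μ + Multiset.replicate t.1 4 + Multiset.replicate t.2.1 3
    + Multiset.replicate t.2.1 1 + Multiset.replicate (2 * t.2.2) 2

/-- The set `Q_μ(M)` of all partitions of `M` of the form `μ ∪ 4^a ∪ (3,1)^b ∪ (2,2)^c`. -/
def Qset (μ : Multiset ℕ) (M : ℕ) : Finset (Multiset ℕ) :=
  Finset.image (qForm μ)
    ((Finset.range (M + 1) ×ˢ Finset.range (M + 1) ×ˢ Finset.range (M + 1)).filter
      (fun t => (qForm μ t).sum = M))

/-- `f_r(λ)`: the number of semistandard Young tableaux of shape `λ` with entries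
in a set of `r` values. -/
noncomputable def numSSYT (r : ℕ) (m : Multiset ℕ) : ℕ :=
  Fintype.card (BddSsyt (ydOf m) r)

/-!
A tableau of shape `(2^i, 1^j)` with entries `< r` is determined by the sets `S`, `T` of entries
of its two columns, and its row condition says exactly that every initial segment `[0, x)`
contains at least as many elements of `S` as of `T`.

For the rectangle `2^k` with entries `< m`, split the alphabet at `n` and let `a`, `b` be the
numbers of entries `≥ n` in the first and second column. The entries `< n` form a tableau of
shape `(2^(k-b), 1^(b-a))` with entries `< n`. The entries `≥ n`, reflected by `x ↦ m - 1 - x`,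
form a tableau of shape `(2^a, 1^(b-a))` with entries `< m - n`, the reflection swapping the
roles of the two columns. Since the two columns of the rectangle have the same size, its
counting condition above and below `n` is exactly the counting condition of the two pieces.
-/

open Finset

namespace Finset

variable {m n : ℕ} {S T A B A' B' : Finset ℕ}

lemma count_mem_eq_card_filter_lt (S : Finset ℕ) (x : ℕ) :
    Nat.count (· ∈ S) x = #{y ∈ S | y < x} := by
  rw [Nat.count_eq_card_filter_range]
  congr 1
  ext y
  simp [and_comm]

lemma nth_mem_of_lt_card {t : ℕ} (ht : t < #S) : Nat.nth (· ∈ S) t ∈ S :=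
  Nat.nth_mem_of_lt_card (p := (· ∈ S)) S.finite_toSet (by simpa using ht)

lemma nth_lt_nth_of_lt_card {s t : ℕ} (hst : s < t) (ht : t < #S) :
    Nat.nth (· ∈ S) s < Nat.nth (· ∈ S) t :=
  Nat.nth_lt_nth_of_lt_card (p := (· ∈ S)) S.finite_toSet hst (by simpa using ht)

lemma nth_of_card_le {t : ℕ} (ht : #S ≤ t) : Nat.nth (· ∈ S) t = 0 :=
  Nat.nth_of_card_le (p := (· ∈ S)) S.finite_toSet (by simpa using ht)

lemma card_filter_lt_nth_succ {t : ℕ} (ht : t < #S) :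
    #{y ∈ S | y < Nat.nth (· ∈ S) t + 1} = t + 1 := by
  rw [← count_mem_eq_card_filter_lt]
  exact Nat.count_nth_succ fun hf => by simpa using ht

lemma image_nth_range_card (S : Finset ℕ) : (range #S).image (Nat.nth (· ∈ S)) = S := by
  apply coe_injective
  rw [coe_image, coe_range]
  simpa using Nat.image_nth_Iio_card (p := (· ∈ S)) S.finite_toSet

lemma card_image_range_of_strictMonoOn {f : ℕ → ℕ} {p : ℕ} (hf : StrictMonoOn f (Set.Iio p)) :
    #((range p).image f) = p := by
  rw [card_image_of_injOn (by rw [coe_range]; exact hf.injOn), card_range]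

lemma nth_image_range_of_strictMonoOn {f : ℕ → ℕ} {p t : ℕ} (hf : StrictMonoOn f (Set.Iio p))
    (ht : t < p) : Nat.nth (· ∈ (range p).image f) t = f t := by
  have hcount : Nat.count (· ∈ (range p).image f) (f t) = t := by
    rw [count_mem_eq_card_filter_lt]
    have : {y ∈ (range p).image f | y < f t} = (range t).image f := by
      ext y
      simp only [mem_filter, mem_image, mem_range]
      constructor
      · rintro ⟨⟨s, hs, rfl⟩, hst⟩
        exact ⟨s, (hf.lt_iff_lt hs ht).1 hst, rfl⟩
      · rintro ⟨s, hs, rfl⟩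
        exact ⟨⟨s, hs.trans ht, rfl⟩, hf (hs.trans ht) ht hs⟩
    rw [this, card_image_range_of_strictMonoOn (hf.mono (Set.Iio_subset_Iio ht.le))]
  calc Nat.nth _ t = Nat.nth _ (Nat.count (· ∈ (range p).image f) (f t)) := by rw [hcount]
    _ = f t := Nat.nth_count (mem_image_of_mem f (mem_range.2 ht))

lemma nth_image_range_of_strictMonoOn_of_eq_zero {f : ℕ → ℕ} {p : ℕ}
    (hf : StrictMonoOn f (Set.Iio p)) (hzero : ∀ t, p ≤ t → f t = 0) (t : ℕ) :
    Nat.nth (· ∈ (range p).image f) t = f t := by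
  rcases lt_or_ge t p with ht | ht
  · exact nth_image_range_of_strictMonoOn hf ht
  · rw [hzero t ht, nth_of_card_le (by rwa [card_image_range_of_strictMonoOn hf])]

def Dominates (S T : Finset ℕ) : Prop := ∀ x, #{y ∈ T | y < x} ≤ #{y ∈ S | y < x}

lemma Dominates.nth_le (h : Dominates S T) {t : ℕ} (ht : t < #T) :
    Nat.nth (· ∈ S) t ≤ Nat.nth (· ∈ T) t := by
  have hcount := h (Nat.nth (· ∈ T) t + 1)
  rw [card_filter_lt_nth_succ ht, ← count_mem_eq_card_filter_lt] at hcount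
  exact Nat.lt_succ_iff.1 (Nat.nth_lt_of_lt_count hcount)

lemma dominates_of_nth_le (hcard : #T ≤ #S)
    (h : ∀ t < #T, Nat.nth (· ∈ S) t ≤ Nat.nth (· ∈ T) t) : Dominates S T := by
  intro x
  obtain hc | hc := Nat.eq_zero_or_pos #{y ∈ T | y < x}
  · simp [hc]
  set c := #{y ∈ T | y < x}
  have hcT : c ≤ #T := card_filter_le _ _
  have hTx : Nat.nth (· ∈ T) (c - 1) < x := by
    apply Nat.nth_lt_of_lt_count
    rw [count_mem_eq_card_filter_lt]
    omega
  calc c = #{y ∈ S | y < Nat.nth (· ∈ S) (c - 1) + 1} := by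
        rw [card_filter_lt_nth_succ (by omega)]; omega
    _ ≤ #{y ∈ S | y < x} := by
        have := h (c - 1) (by omega)
        exact card_le_card fun y hy => by
          rw [mem_filter] at hy ⊢
          exact ⟨hy.1, by omega⟩

lemma dominates_iff_nth_le (hcard : #T ≤ #S) :
    Dominates S T ↔ ∀ t < #T, Nat.nth (· ∈ S) t ≤ Nat.nth (· ∈ T) t :=
  ⟨fun h _ => h.nth_le, dominates_of_nth_le hcard⟩

def lowPart (n : ℕ) (S : Finset ℕ) : Finset ℕ := {x ∈ S | x < n}

def highPart (m n : ℕ) (S : Finset ℕ) : Finset ℕ := {x ∈ S | n ≤ x}.image (m - 1 - ·)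

lemma injOn_reflect (m : ℕ) : Set.InjOn (m - 1 - ·) (range m) := by
  intro x hx y hy hxy
  simp only [coe_range, Set.mem_Iio] at hx hy hxy
  omega

lemma image_reflect_reflect (hS : S ⊆ range m) :
    (S.image (m - 1 - ·)).image (m - 1 - ·) = S := by
  rw [image_image]
  refine (image_congr fun x hx => ?_).trans image_id
  have := mem_range.1 (hS hx)
  simp only [Function.comp, id]
  omega

lemma card_filter_lt_of_subset_range {x : ℕ} (hS : S ⊆ range n) (hx : n ≤ x) :
    #{y ∈ S | y < x} = #S := by
  rw [filter_true_of_mem fun y hy => (mem_range.1 (hS hy)).trans_le hx]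

lemma card_filter_le_eq_sub (S : Finset ℕ) (c : ℕ) :
    #{x ∈ S | c ≤ x} = #S - #{x ∈ S | x < c} := by
  rw [← card_filter_add_card_filter_not (s := S) (· < c)]
  simp only [not_lt, Nat.add_sub_cancel_left]

lemma card_filter_lt_image_reflect (hS : S ⊆ range m) (z : ℕ) :
    #{y ∈ S.image (m - 1 - ·) | y < z} = #{x ∈ S | m - z ≤ x} := by
  rw [filter_image, card_image_of_injOn
    ((injOn_reflect m).mono fun _ hx => hS (mem_filter.1 hx).1)]
  congr 1
  refine filter_congr fun x hx => ?_
  have := mem_range.1 (hS hx)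
  omega

lemma card_highPart (hS : S ⊆ range m) : #(highPart m n S) = #{x ∈ S | n ≤ x} :=
  card_image_of_injOn ((injOn_reflect m).mono fun _ hx => hS (mem_filter.1 hx).1)

lemma card_filter_lt_highPart (hS : S ⊆ range m) (z : ℕ) :
    #{y ∈ highPart m n S | y < z} = #S - #{x ∈ S | x < max n (m - z)} := by
  rw [highPart, card_filter_lt_image_reflect ((filter_subset (n ≤ ·) S).trans hS), filter_filter,
    ← card_filter_le_eq_sub]
  congr 1
  exact filter_congr fun _ _ => max_le_iff.symm

lemma lowPart_subset_range : lowPart n S ⊆ range n := fun _ hx =>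
  mem_range.2 (mem_filter.1 hx).2

lemma highPart_subset_range (hS : S ⊆ range m) : highPart m n S ⊆ range (m - n) := by
  intro y hy
  obtain ⟨x, hx, rfl⟩ := mem_image.1 hy
  have := mem_range.1 (hS (mem_filter.1 hx).1)
  have := (mem_filter.1 hx).2
  rw [mem_range]
  omega

lemma card_lowPart (S : Finset ℕ) : #(lowPart n S) = #S - #{x ∈ S | n ≤ x} := by
  have := card_filter_add_card_filter_not (s := S) (· < n)
  simp only [not_lt] at this
  rw [lowPart]
  omega

lemma filter_lowPart_lt (S : Finset ℕ) (x : ℕ) :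
    {y ∈ lowPart n S | y < x} = {y ∈ S | y < min x n} := by
  rw [lowPart, filter_filter]
  exact filter_congr fun _ _ => by rw [lt_min_iff, and_comm]

lemma Dominates.lowPart (h : Dominates S T) : Dominates (lowPart n S) (lowPart n T) := by
  intro x
  rw [filter_lowPart_lt, filter_lowPart_lt]
  exact h _

lemma Dominates.highPart (hS : S ⊆ range m) (hT : T ⊆ range m) (hcard : #S = #T)
    (h : Dominates S T) : Dominates (highPart m n T) (highPart m n S) := by
  intro z
  rw [card_filter_lt_highPart hS, card_filter_lt_highPart hT]
  have := h (max n (m - z))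
  omega

section Join

variable (hA : A ⊆ range n) (hB : B ⊆ range (m - n))
include hA hB

lemma lowPart_union_image_reflect : lowPart n (A ∪ B.image (m - 1 - ·)) = A := by
  rw [lowPart, filter_union, filter_true_of_mem fun x hx => mem_range.1 (hA hx),
    filter_false_of_mem, union_empty]
  simp only [mem_image, forall_exists_index, and_imp]
  rintro _ y hy rfl
  have := mem_range.1 (hB hy)
  omega

lemma highPart_union_image_reflect : highPart m n (A ∪ B.image (m - 1 - ·)) = B := by
  rw [highPart, filter_union, filter_false_of_mem fun x hx => by simpa using hA hx,
    filter_true_of_mem, empty_union,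
    image_reflect_reflect (hB.trans (range_subset_range.2 (Nat.sub_le m n)))]
  simp only [mem_image, forall_exists_index, and_imp]
  rintro _ y hy rfl
  have := mem_range.1 (hB hy)
  omega

lemma union_image_reflect_subset_range (hnm : n ≤ m) :
    A ∪ B.image (m - 1 - ·) ⊆ range m := by
  refine union_subset (hA.trans (range_subset_range.2 hnm)) fun _ hx => ?_
  obtain ⟨y, hy, rfl⟩ := mem_image.1 hx
  have := mem_range.1 (hB hy)
  exact mem_range.2 (by omega)

lemma disjoint_image_reflect : Disjoint A (B.image (m - 1 - ·)) := by
  rw [disjoint_right]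
  rintro _ hx hxA
  obtain ⟨y, hy, rfl⟩ := mem_image.1 hx
  have := mem_range.1 (hA hxA)
  have := mem_range.1 (hB hy)
  omega

lemma card_union_image_reflect : #(A ∪ B.image (m - 1 - ·)) = #A + #B := by
  rw [card_union_of_disjoint (disjoint_image_reflect hA hB),
    card_image_of_injOn ((injOn_reflect m).mono fun _ hy =>
      range_subset_range.2 (Nat.sub_le m n) (hB hy))]

lemma card_filter_lt_union_image_reflect (x : ℕ) :
    #{y ∈ A ∪ B.image (m - 1 - ·) | y < x} =
      #{y ∈ A | y < x} + (#B - #{y ∈ B | y < m - x}) := by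
  rw [filter_union, card_union_of_disjoint ((disjoint_image_reflect hA hB).mono
    (filter_subset _ _) (filter_subset _ _)),
    card_filter_lt_image_reflect (hB.trans (range_subset_range.2 (Nat.sub_le m n))),
    card_filter_le_eq_sub]

end Join

lemma Dominates.union_image_reflect (hA : A ⊆ range n) (hB : B ⊆ range (m - n))
    (hA' : A' ⊆ range n) (hB' : B' ⊆ range (m - n)) (hcard : #A + #B = #A' + #B')
    (h : Dominates A A') (h' : Dominates B' B) :
    Dominates (A ∪ B.image (m - 1 - ·)) (A' ∪ B'.image (m - 1 - ·)) := by
  intro x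
  rw [card_filter_lt_union_image_reflect hA hB, card_filter_lt_union_image_reflect hA' hB']
  have := h x
  have := h' (m - x)
  have := card_filter_le B (· < m - x)
  have := card_filter_le B' (· < m - x)
  rcases le_total x n with hx | hx
  · rw [card_filter_lt_of_subset_range hB (by omega : m - n ≤ m - x),
      card_filter_lt_of_subset_range hB' (by omega : m - n ≤ m - x)]
    omega
  · rw [card_filter_lt_of_subset_range hA hx, card_filter_lt_of_subset_range hA' hx]
    omega

lemma lowPart_union_highPart (hS : S ⊆ range m) :
    lowPart n S ∪ (highPart m n S).image (m - 1 - ·) = S := by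
  rw [highPart, image_reflect_reflect ((filter_subset _ S).trans hS), lowPart, filter_union_right,
    filter_true_of_mem fun x _ => lt_or_ge x n]


lemma card_filter_le_le_sub_of_subset_range (hT : T ⊆ range m) :
    #{x ∈ T | n ≤ x} ≤ m - n := by
  calc #{x ∈ T | n ≤ x} ≤ #(Ico n m) := card_le_card fun x hx => by
        rw [mem_filter] at hx
        exact mem_Ico.2 ⟨hx.2, mem_range.1 (hT hx.1)⟩
    _ = m - n := Nat.card_Ico n m

lemma Dominates.card_filter_le_le (h : Dominates S T)
    (hcard : #S = #T) : #{x ∈ S | n ≤ x} ≤ #{x ∈ T | n ≤ x} := by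
  rw [card_filter_le_eq_sub, card_filter_le_eq_sub]
  have := h n
  omega

end Finset

open Classical in
/-- The pairs of column entry sets of the tableaux of shape `(2^q, 1^(p-q))` with entries `< r`. -/
noncomputable def twoColumnSets (r p q : ℕ) : Finset (Finset ℕ × Finset ℕ) :=
  {ST ∈ (range r).powersetCard p ×ˢ (range r).powersetCard q | Dominates ST.1 ST.2}

lemma mem_twoColumnSets {r p q : ℕ} {ST : Finset ℕ × Finset ℕ} :
    ST ∈ twoColumnSets r p q ↔
      (ST.1 ⊆ range r ∧ #ST.1 = p) ∧ (ST.2 ⊆ range r ∧ #ST.2 = q) ∧ Dominates ST.1 ST.2 := by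
  simp [twoColumnSets, and_assoc]

lemma sort_twoOne (i j : ℕ) :
    (twoOne i j).sort (· ≥ ·) = List.replicate i 2 ++ List.replicate j 1 := by
  apply List.Perm.eq_of_pairwise' (r := fun a b : ℕ => a ≥ b) (Multiset.pairwise_sort _ _)
  · rw [List.pairwise_append]
    refine ⟨List.pairwise_replicate.2 (by simp), List.pairwise_replicate.2 (by simp), ?_⟩
    simp only [List.mem_replicate]
    omega
  · rw [← Multiset.coe_eq_coe, Multiset.sort_eq]
    simp [twoOne, ← Multiset.coe_replicate]

lemma mem_ydOf_twoOne {i j r c : ℕ} :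
    (r, c) ∈ ydOf (twoOne i j) ↔ c = 0 ∧ r < i + j ∨ c = 1 ∧ r < i := by
  rw [ydOf, YoungDiagram.mem_ofRowLens]
  simp only [sort_twoOne, List.length_append, List.length_replicate, List.getElem_append,
    List.getElem_replicate]
  constructor
  · rintro ⟨h, hc⟩
    split_ifs at hc <;> omega
  · rintro (⟨rfl, h⟩ | ⟨rfl, h⟩) <;> refine ⟨by omega, ?_⟩ <;> split_ifs <;> omega

namespace BddSsyt

variable {r i j : ℕ}

def columnSets (T : BddSsyt (ydOf (twoOne i j)) r) : Finset ℕ × Finset ℕ :=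
  ((range (i + j)).image (T.1 · 0), (range i).image (T.1 · 1))

noncomputable def ofColumnSets (ST : Finset ℕ × Finset ℕ) (h : ST ∈ twoColumnSets r (i + j) i) :
    BddSsyt (ydOf (twoOne i j)) r where
  val :=
    { entry := fun t c =>
        if c = 0 then Nat.nth (· ∈ ST.1) t else if c = 1 then Nat.nth (· ∈ ST.2) t else 0
      row_weak' := by
        intro t c₁ c₂ hc hmem
        obtain ⟨rfl, ht⟩ : c₂ = 1 ∧ t < i := by rw [mem_ydOf_twoOne] at hmem; omega
        obtain rfl : c₁ = 0 := by omega
        simpa using (mem_twoColumnSets.1 h).2.2.nth_le ((mem_twoColumnSets.1 h).2.1.2 ▸ ht)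
      col_strict' := by
        intro t₁ t₂ c ht hmem
        rcases mem_ydOf_twoOne.1 hmem with ⟨rfl, h'⟩ | ⟨rfl, h'⟩
        · simpa using nth_lt_nth_of_lt_card ht ((mem_twoColumnSets.1 h).1.2 ▸ h')
        · simpa using nth_lt_nth_of_lt_card ht ((mem_twoColumnSets.1 h).2.1.2 ▸ h')
      zeros' := by
        intro t c hmem
        have := mem_twoColumnSets.1 h
        rw [mem_ydOf_twoOne] at hmem
        split_ifs
        · exact nth_of_card_le (by omega)
        · exact nth_of_card_le (by omega)
        · rfl }
  property := by
    obtain ⟨hS, hT, -⟩ := mem_twoColumnSets.1 h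
    rintro ⟨t, c⟩ hmem
    rcases mem_ydOf_twoOne.1 ((YoungDiagram.mem_cells _).1 hmem) with ⟨rfl, h'⟩ | ⟨rfl, h'⟩
    · exact mem_range.1 (hS.1 (nth_mem_of_lt_card (hS.2 ▸ h')))
    · exact mem_range.1 (hT.1 (nth_mem_of_lt_card (hT.2 ▸ h')))

lemma strictMonoOn_col_zero (T : BddSsyt (ydOf (twoOne i j)) r) :
    StrictMonoOn (T.1 · 0) (Set.Iio (i + j)) :=
  fun _ _ _ ht hst => T.1.col_strict hst (mem_ydOf_twoOne.2 (.inl ⟨rfl, ht⟩))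

lemma strictMonoOn_col_one (T : BddSsyt (ydOf (twoOne i j)) r) :
    StrictMonoOn (T.1 · 1) (Set.Iio i) :=
  fun _ _ _ ht hst => T.1.col_strict hst (mem_ydOf_twoOne.2 (.inr ⟨rfl, ht⟩))

lemma columnSets_mem (T : BddSsyt (ydOf (twoOne i j)) r) :
    columnSets T ∈ twoColumnSets r (i + j) i := by
  have hcard₀ : #((range (i + j)).image (T.1 · 0)) = i + j :=
    card_image_range_of_strictMonoOn T.strictMonoOn_col_zero
  have hcard₁ : #((range i).image (T.1 · 1)) = i :=
    card_image_range_of_strictMonoOn T.strictMonoOn_col_one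
  have hbound : ∀ c t, (t, c) ∈ ydOf (twoOne i j) → T.1 t c < r := fun c t h =>
    T.2 (t, c) ((YoungDiagram.mem_cells _).2 h)
  rw [columnSets, mem_twoColumnSets]
  dsimp only
  rw [dominates_iff_nth_le (by omega)]
  refine ⟨⟨?_, hcard₀⟩, ⟨?_, hcard₁⟩, ?_⟩
  · simp only [subset_iff, mem_image, mem_range, forall_exists_index, and_imp]
    rintro _ t ht rfl
    exact hbound 0 t (mem_ydOf_twoOne.2 (.inl ⟨rfl, ht⟩))
  · simp only [subset_iff, mem_image, mem_range, forall_exists_index, and_imp]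
    rintro _ t ht rfl
    exact hbound 1 t (mem_ydOf_twoOne.2 (.inr ⟨rfl, ht⟩))
  · intro t ht
    rw [hcard₁] at ht
    rw [nth_image_range_of_strictMonoOn T.strictMonoOn_col_zero (by omega),
      nth_image_range_of_strictMonoOn T.strictMonoOn_col_one ht]
    exact T.1.row_weak zero_lt_one (mem_ydOf_twoOne.2 (.inr ⟨rfl, ht⟩))

lemma ofColumnSets_columnSets (T : BddSsyt (ydOf (twoOne i j)) r) :
    ofColumnSets (columnSets T) T.columnSets_mem = T := by
  apply Subtype.ext
  ext t c
  change (if c = 0 then _ else if c = 1 then _ else 0) = T.1 t c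
  split_ifs with h₀ h₁
  · subst h₀
    exact nth_image_range_of_strictMonoOn_of_eq_zero T.strictMonoOn_col_zero
      (fun _ _ => T.1.zeros (by rw [mem_ydOf_twoOne]; omega)) t
  · subst h₁
    exact nth_image_range_of_strictMonoOn_of_eq_zero T.strictMonoOn_col_one
      (fun _ _ => T.1.zeros (by rw [mem_ydOf_twoOne]; omega)) t
  · exact (T.1.zeros (by rw [mem_ydOf_twoOne]; omega)).symm

lemma columnSets_ofColumnSets (ST : Finset ℕ × Finset ℕ) (h : ST ∈ twoColumnSets r (i + j) i) :
    columnSets (ofColumnSets ST h) = ST := by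
  obtain ⟨⟨-, hS⟩, ⟨-, hT⟩, -⟩ := mem_twoColumnSets.1 h
  have hS' := image_nth_range_card ST.1
  have hT' := image_nth_range_card ST.2
  rw [hS] at hS'
  rw [hT] at hT'
  exact Prod.ext hS' hT'

end BddSsyt

theorem numSSYT_twoOne_eq_card_twoColumnSets (r i j : ℕ) :
    numSSYT r (twoOne i j) = #(twoColumnSets r (i + j) i) := by
  rw [numSSYT, ← card_univ]
  exact card_bij' (fun T _ => T.columnSets) BddSsyt.ofColumnSets
    (fun T _ => T.columnSets_mem) (fun _ _ => mem_univ _)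
    (fun T _ => T.ofColumnSets_columnSets) BddSsyt.columnSets_ofColumnSets

theorem card_filter_twoColumnSets_eq_mul {m n k a b : ℕ} (hnm : n ≤ m) (ha : a ≤ k)
    (hb : b ≤ k) :
    #{ST ∈ twoColumnSets m k k | #{x ∈ ST.2 | n ≤ x} = b ∧ #{x ∈ ST.1 | n ≤ x} = a} =
      #(twoColumnSets n (k - a) (k - b)) * #(twoColumnSets (m - n) b a) := by
  rw [← card_product]
  refine card_nbij'
    (fun ST => ((lowPart n ST.1, lowPart n ST.2), (highPart m n ST.2, highPart m n ST.1)))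
    (fun P => (P.1.1 ∪ P.2.2.image (m - 1 - ·), P.1.2 ∪ P.2.1.image (m - 1 - ·)))
    ?_ ?_ ?_ ?_
  · rintro ⟨S, T⟩ h
    simp only [coe_filter, Set.mem_ofPred_eq, mem_twoColumnSets] at h
    obtain ⟨⟨⟨hS, hSk⟩, ⟨hT, hTk⟩, hST⟩, rfl, rfl⟩ := h
    simp only [coe_product, Set.mem_prod, mem_coe, mem_twoColumnSets]
    refine ⟨⟨⟨lowPart_subset_range, by rw [card_lowPart, hSk]⟩,
      ⟨lowPart_subset_range, by rw [card_lowPart, hTk]⟩, hST.lowPart⟩,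
      ⟨highPart_subset_range hT, card_highPart hT⟩, ⟨highPart_subset_range hS, card_highPart hS⟩,
      hST.highPart hS hT (hSk.trans hTk.symm)⟩
  · rintro ⟨⟨S₁, T₁⟩, ⟨T₂, S₂⟩⟩ h
    simp only [coe_product, Set.mem_prod, mem_coe, mem_twoColumnSets] at h
    obtain ⟨⟨⟨hS₁, hS₁k⟩, ⟨hT₁, hT₁k⟩, h₁⟩, ⟨hT₂, hT₂b⟩, ⟨hS₂, hS₂a⟩, h₂⟩ := h
    simp only [coe_filter, Set.mem_ofPred_eq, mem_twoColumnSets]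
    have hS := union_image_reflect_subset_range hS₁ hS₂ hnm
    have hT := union_image_reflect_subset_range hT₁ hT₂ hnm
    refine ⟨⟨⟨hS, ?_⟩, ⟨hT, ?_⟩, h₁.union_image_reflect hS₁ hS₂ hT₁ hT₂ ?_ h₂⟩, ?_, ?_⟩
    · rw [card_union_image_reflect hS₁ hS₂]; omega
    · rw [card_union_image_reflect hT₁ hT₂]; omega
    · omega
    · rw [← card_highPart hT, highPart_union_image_reflect hT₁ hT₂, hT₂b]
    · rw [← card_highPart hS, highPart_union_image_reflect hS₁ hS₂, hS₂a]
  · rintro ⟨S, T⟩ h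
    simp only [coe_filter, Set.mem_ofPred_eq, mem_twoColumnSets] at h
    obtain ⟨⟨⟨hS, -⟩, ⟨hT, -⟩, -⟩, -, -⟩ := h
    exact Prod.ext (lowPart_union_highPart hS) (lowPart_union_highPart hT)
  · rintro ⟨⟨S₁, T₁⟩, ⟨T₂, S₂⟩⟩ h
    simp only [coe_product, Set.mem_prod, mem_coe, mem_twoColumnSets] at h
    obtain ⟨⟨⟨hS₁, -⟩, ⟨hT₁, -⟩, -⟩, ⟨hT₂, -⟩, ⟨hS₂, -⟩, -⟩ := h
    simp only [lowPart_union_image_reflect hS₁ hS₂, lowPart_union_image_reflect hT₁ hT₂,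
      highPart_union_image_reflect hS₁ hS₂, highPart_union_image_reflect hT₁ hT₂]

theorem numSSYT_two_cols_convolution_general (m n k : ℕ) (hnm : n ≤ m) :
    numSSYT m (Multiset.replicate k 2)
      = ∑ b ∈ Finset.range (m - n + 1), ∑ a ∈ Finset.range (b + 1),
          (if b ≤ k then numSSYT n (twoOne (k - b) (b - a)) else 0)
            * numSSYT (m - n) (twoOne a (b - a)) := by
  have high_le_sub : ∀ ST ∈ twoColumnSets m k k, #{x ∈ ST.2 | n ≤ x} ≤ m - n := fun _ h =>
    card_filter_le_le_sub_of_subset_range (mem_twoColumnSets.1 h).2.1.1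
  have high_le_high : ∀ ST ∈ twoColumnSets m k k, #{x ∈ ST.1 | n ≤ x} ≤ #{x ∈ ST.2 | n ≤ x} :=
    fun _ h => (mem_twoColumnSets.1 h).2.2.card_filter_le_le <| by
      rw [(mem_twoColumnSets.1 h).1.2, (mem_twoColumnSets.1 h).2.1.2]
  have high_le_k : ∀ ST ∈ twoColumnSets m k k, #{x ∈ ST.2 | n ≤ x} ≤ k := fun _ h =>
    (card_filter_le _ _).trans (mem_twoColumnSets.1 h).2.1.2.le
  rw [show Multiset.replicate k 2 = twoOne k 0 by simp [twoOne],
    numSSYT_twoOne_eq_card_twoColumnSets, add_zero, card_eq_sum_card_fiberwise fun ST h =>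
      mem_range.2 (Nat.lt_succ_of_le (high_le_sub ST h))]
  refine sum_congr rfl fun b _ => ?_
  rw [card_eq_sum_card_fiberwise fun ST h => mem_range.2 <| Nat.lt_succ_of_le <|
    (mem_filter.1 h).2 ▸ high_le_high ST (mem_filter.1 h).1]
  refine sum_congr rfl fun a ha => ?_
  have hab : a ≤ b := mem_range_succ_iff.1 ha
  rw [filter_filter]
  split_ifs with hbk
  · rw [card_filter_twoColumnSets_eq_mul hnm (hab.trans hbk) hbk,
      numSSYT_twoOne_eq_card_twoColumnSets, numSSYT_twoOne_eq_card_twoColumnSets]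
    congr 3 <;> omega
  · rw [zero_mul, card_eq_zero, filter_eq_empty_iff]
    exact fun ST h hST => hbk (hST.1 ▸ high_le_k ST h)

/-- For `m ≥ n ≥ 1` and `k ≥ 0`,
`f_m(2^k) = ∑_{0 ≤ a ≤ b ≤ m-n} f_n(2^{k-b},1^{b-a}) f_{m-n}(2^a,1^{b-a})`,
with `f_r(2^i,1^j) = 0` when `i < 0`. -/
theorem numSSYT_two_cols_convolution (m n k : ℕ) (hn : 1 ≤ n) (hnm : n ≤ m) :
    numSSYT m (Multiset.replicate k 2)
      = ∑ b ∈ Finset.range (m - n + 1), ∑ a ∈ Finset.range (b + 1),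
          (if b ≤ k then numSSYT n (twoOne (k - b) (b - a)) else 0)
            * numSSYT (m - n) (twoOne a (b - a)) :=
  numSSYT_two_cols_convolution_general m n k hnm
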